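/- Let ζ be a Borel probability measure on ℝ^q with compact support, let Ψ : ℝ^m × ℝ^q → ℝ be continuous, and suppose that for each z ∈ supp ζ the map y ↦ Ψ(y,z) is differentiable with gradient ∇_yΨ(y,z), with (y,z) ↦ ∇_yΨ(y,z) continuous and ‖∇_yΨ(y,z)‖ ≤ l for all y ∈ ℝ^m and z ∈ supp ζ. Then the map (y, μ) ↦ (∫ e^{Ψ(y,z)/μ} ∇_yΨ(y,z) dζ(z)) / (∫ e^{Ψ(y,z)/μ} dζ(z)) is continuous on ℝ^m × (0, ∞). -/

import Mathlib

open MeasureTheory Filter Real Set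

/-- The (topological) support of a measure: points all of whose neighborhoods have
positive measure. -/
def msupport {E : Type*} [TopologicalSpace E] [MeasurableSpace E] (ζ : Measure E) : Set E :=
  {x | ∀ U ∈ nhds x, 0 < ζ U}

lemma msupport_compl_null {E : Type*} [TopologicalSpace E] [MeasurableSpace E]
    [SecondCountableTopology E] (ζ : Measure E) : ζ (msupport ζ)ᶜ = 0 := by
  obtain ⟨B, hBc, -, hB⟩ := TopologicalSpace.exists_countable_basis E
  have hsub : (msupport ζ)ᶜ ⊆ ⋃ U ∈ {U ∈ B | ζ U = 0}, U := by
    intro x hx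
    simp only [msupport, mem_compl_iff, mem_setOf_eq, not_forall] at hx
    obtain ⟨U, hU, hU0⟩ := hx
    have hU0 : ζ U = 0 := by simpa using hU0
    obtain ⟨V, hVB, hxV, hVU⟩ := hB.mem_nhds_iff.mp hU
    exact mem_biUnion ⟨hVB, measure_mono_null hVU hU0⟩ hxV
  exact measure_mono_null hsub
    ((measure_biUnion_null_iff (hBc.mono (sep_subset _ _))).mpr fun U hU => hU.2)

/-- the Gibbs-average gradient
`(y, μ) ↦ (∫ e^{Ψ(y,z)/μ} ∇_yΨ(y,z) dζ)/(∫ e^{Ψ(y,z)/μ} dζ)` is jointly continuous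
on `ℝ^m × (0, ∞)`. -/
theorem gibbs_gradient_jointly_continuous {m q : ℕ}
    (ζ : Measure (EuclideanSpace ℝ (Fin q))) [IsProbabilityMeasure ζ]
    (hc : IsCompact (msupport ζ))
    (Ψ : EuclideanSpace ℝ (Fin m) → EuclideanSpace ℝ (Fin q) → ℝ)
    (hΨ : Continuous fun p : EuclideanSpace ℝ (Fin m) × EuclideanSpace ℝ (Fin q) => Ψ p.1 p.2)
    (Ψ' : EuclideanSpace ℝ (Fin m) → EuclideanSpace ℝ (Fin q) → EuclideanSpace ℝ (Fin m))
    (hgrad : ∀ (y : EuclideanSpace ℝ (Fin m)), ∀ z ∈ msupport ζ,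
      HasGradientAt (fun y' => Ψ y' z) (Ψ' y z) y)
    (hΨ'cont : Continuous fun p : EuclideanSpace ℝ (Fin m) × EuclideanSpace ℝ (Fin q) =>
      Ψ' p.1 p.2)
    (l : ℝ)
    (hbound : ∀ (y : EuclideanSpace ℝ (Fin m)), ∀ z ∈ msupport ζ, ‖Ψ' y z‖ ≤ l) :
    ContinuousOn
      (fun p : EuclideanSpace ℝ (Fin m) × ℝ =>
        (∫ z, Real.exp (Ψ p.1 z / p.2) ∂ζ)⁻¹ • ∫ z, Real.exp (Ψ p.1 z / p.2) • Ψ' p.1 z ∂ζ)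
      (Set.univ ×ˢ Set.Ioi (0 : ℝ)) := by
  have hK0 : ζ (msupport ζ)ᶜ = 0 := msupport_compl_null ζ
  have haeK : ∀ᵐ z ∂ζ, z ∈ msupport ζ := by
    rw [MeasureTheory.ae_iff]
    exact hK0
  set l' : ℝ := max l 0 with hl'
  rintro ⟨y₀, μ₀⟩ ⟨-, hμ₀⟩
  simp only [mem_Ioi] at hμ₀
  -- a compact neighborhood in the `p` variable
  have hScpt : IsCompact (Metric.closedBall y₀ 1 ×ˢ msupport ζ) :=
    (isCompact_closedBall y₀ 1).prod hc
  -- bound on |Ψ| on this compact set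
  obtain ⟨C, hC0, hC⟩ : ∃ C : ℝ, 0 ≤ C ∧ ∀ y ∈ Metric.closedBall y₀ 1, ∀ z ∈ msupport ζ,
      |Ψ y z| ≤ C := by
    obtain ⟨C, hC⟩ := hScpt.exists_bound_of_continuousOn
      (hΨ.comp continuous_id).continuousOn (f := fun p => Ψ p.1 p.2)
    refine ⟨max C 0, le_max_right _ _, fun y hy z hz => ?_⟩
    have := hC ⟨y, z⟩ ⟨hy, hz⟩
    calc |Ψ y z| = ‖Ψ y z‖ := rfl
      _ ≤ C := this
      _ ≤ max C 0 := le_max_left _ _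
  set Bd : ℝ := Real.exp (C / (μ₀ / 2)) with hBd
  have hBd0 : 0 ≤ Bd := (Real.exp_pos _).le
  -- pointwise exponential bound
  have hexp_le : ∀ p : EuclideanSpace ℝ (Fin m) × ℝ,
      p ∈ Metric.closedBall y₀ 1 ×ˢ Icc (μ₀ / 2) (μ₀ + 1) →
      ∀ z ∈ msupport ζ, Real.exp (Ψ p.1 z / p.2) ≤ Bd := by
    rintro ⟨y, μ⟩ ⟨hy, hμ⟩ z hz
    have hμpos : 0 < μ := lt_of_lt_of_le (by linarith) hμ.1
    exact Real.exp_le_exp.mpr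
      (div_le_div₀ hC0 ((le_abs_self _).trans (hC y hy z hz)) (by linarith) hμ.1)
  -- measurability facts
  have hmeas1 : ∀ p : EuclideanSpace ℝ (Fin m) × ℝ,
      AEStronglyMeasurable (fun z => Real.exp (Ψ p.1 z / p.2)) ζ := fun p =>
    (Real.continuous_exp.comp ((hΨ.comp (Continuous.prodMk_right p.1)).div_const p.2)).aestronglyMeasurable
  have hmeas2 : ∀ p : EuclideanSpace ℝ (Fin m) × ℝ,
      AEStronglyMeasurable (fun z => Real.exp (Ψ p.1 z / p.2) • Ψ' p.1 z) ζ := fun p =>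
    ((Real.continuous_exp.comp ((hΨ.comp (Continuous.prodMk_right p.1)).div_const p.2)).smul
      (hΨ'cont.comp (Continuous.prodMk_right p.1))).aestronglyMeasurable
  -- the neighborhood
  have hSnhds : Metric.closedBall y₀ 1 ×ˢ Icc (μ₀ / 2) (μ₀ + 1) ∈ nhds ((y₀, μ₀) :
      EuclideanSpace ℝ (Fin m) × ℝ) :=
    prod_mem_nhds (Metric.closedBall_mem_nhds y₀ one_pos)
      (Icc_mem_nhds (by linarith) (by linarith))
  -- continuity of the denominator
  have hA : ContinuousAt (fun p : EuclideanSpace ℝ (Fin m) × ℝ =>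
      ∫ z, Real.exp (Ψ p.1 z / p.2) ∂ζ) (y₀, μ₀) := by
    apply MeasureTheory.continuousAt_of_dominated (bound := fun _ => Bd)
    · exact Eventually.of_forall fun p => hmeas1 p
    · filter_upwards [hSnhds] with p hp
      filter_upwards [haeK] with z hz
      rw [Real.norm_eq_abs, abs_of_pos (Real.exp_pos _)]
      exact hexp_le p hp z hz
    · exact integrable_const _
    · refine Eventually.of_forall fun z => ?_
      exact Real.continuous_exp.continuousAt.comp <|
        ((hΨ.comp (continuous_fst.prodMk continuous_const)).continuousAt.div
          continuous_snd.continuousAt (by exact hμ₀.ne'))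
  -- continuity of the numerator
  have hB : ContinuousAt (fun p : EuclideanSpace ℝ (Fin m) × ℝ =>
      ∫ z, Real.exp (Ψ p.1 z / p.2) • Ψ' p.1 z ∂ζ) (y₀, μ₀) := by
    apply MeasureTheory.continuousAt_of_dominated (bound := fun _ => Bd * l')
    · exact Eventually.of_forall fun p => hmeas2 p
    · filter_upwards [hSnhds] with p hp
      filter_upwards [haeK] with z hz
      rw [norm_smul, Real.norm_eq_abs, abs_of_pos (Real.exp_pos _)]
      exact mul_le_mul (hexp_le p hp z hz)
        ((hbound p.1 z hz).trans (le_max_left _ _)) (norm_nonneg _) hBd0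
    · exact integrable_const _
    · refine Eventually.of_forall fun z => ?_
      exact (Real.continuous_exp.continuousAt.comp <|
        ((hΨ.comp (continuous_fst.prodMk continuous_const)).continuousAt.div
          continuous_snd.continuousAt (by exact hμ₀.ne'))).smul
        (hΨ'cont.comp (continuous_fst.prodMk continuous_const)).continuousAt
  -- the denominator is positive at the point
  have hApos : 0 < ∫ z, Real.exp (Ψ y₀ z / μ₀) ∂ζ := by
    apply integral_exp_pos (f := fun z => Ψ y₀ z / μ₀)
    refine Integrable.mono' (integrable_const Bd) (hmeas1 (y₀, μ₀)) ?_
    filter_upwards [haeK] with z hz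
    rw [Real.norm_eq_abs, abs_of_pos (Real.exp_pos _)]
    exact hexp_le (y₀, μ₀) (Set.mk_mem_prod (Metric.mem_closedBall_self one_pos.le)
      (Set.mem_Icc.mpr ⟨by linarith, by linarith⟩)) z hz
  exact ((hA.inv₀ hApos.ne').smul hB).continuousWithinAt
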